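/- Let f : [0,1]^{n_x} → ℝ be a continuous piecewise affine function that is nonnegative on [0,1]^{n_x}. Then there exist depths r_γ, r_η ≥ 1 and parameters θ_γ, θ_η such that f(x) = N(x;θ_γ, n_x+1, r_γ) − N(x;θ_η, n_x+1, r_η) for all x ∈ [0,1]^{n_x}, where both neural networks are ReLU networks of width n_x + 1. -/

import Mathlib

open Finset Matrix

/-- The affine map `x ↦ W x + b`. -/
def affineMapVec {m n : ℕ} (W : Matrix (Fin m) (Fin n) ℝ) (b : Fin m → ℝ)
    (x : Fin n → ℝ) : Fin m → ℝ :=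
  fun i => (∑ j, W i j * x j) + b i

/-- Componentwise rectifier (ReLU). -/
def reluVec {n : ℕ} (v : Fin n → ℝ) : Fin n → ℝ := fun i => max 0 (v i)

/-- Parameters θ of a feed-forward ReLU network with `L ≥ 1` hidden layers of width `M`,
input dimension `nx` and output dimension `nu`:  the first hidden layer `(W1, b1)`,
the `L - 1` remaining hidden layers `(W l, b l)`, and the output layer `(Wout, bout)`. -/
structure ReLUNetParams (nx nu M L : ℕ) where
  W1 : Matrix (Fin M) (Fin nx) ℝ
  b1 : Fin M → ℝ
  W : Fin (L - 1) → Matrix (Fin M) (Fin M) ℝ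
  b : Fin (L - 1) → Fin M → ℝ
  Wout : Matrix (Fin nu) (Fin M) ℝ
  bout : Fin nu → ℝ

/-- The function `N(·; θ, M, L) = f_{L+1} ∘ g_L ∘ f_L ∘ ⋯ ∘ g_1 ∘ f_1` computed by the
ReLU network with parameters `θ`. -/
def ReLUNetParams.eval {nx nu M L : ℕ} (p : ReLUNetParams nx nu M L)
    (x : Fin nx → ℝ) : Fin nu → ℝ :=
  affineMapVec p.Wout p.bout <|
    (List.finRange (L - 1)).foldl
      (fun ξ l => reluVec (affineMapVec (p.W l) (p.b l) ξ))
      (reluVec (affineMapVec p.W1 p.b1 x))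

/-- A polyhedron `{x | Z x ≤ z}`. -/
def IsPolyhedron {n : ℕ} (S : Set (Fin n → ℝ)) : Prop :=
  ∃ (m : ℕ) (Z : Matrix (Fin m) (Fin n) ℝ) (z : Fin m → ℝ),
    S = {x | ∀ i, (∑ j, Z i j * x j) ≤ z i}

/-- `f` is piecewise affine on `D`: finitely many polyhedra with pairwise disjoint
interiors whose union is `D`, with `f` affine on each. -/
def IsPWAOn {n m : ℕ} (D : Set (Fin n → ℝ)) (f : (Fin n → ℝ) → Fin m → ℝ) : Prop :=
  ∃ (r : ℕ) (R : Fin r → Set (Fin n → ℝ))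
    (K : Fin r → Matrix (Fin m) (Fin n) ℝ) (g : Fin r → Fin m → ℝ),
    (∀ i, IsPolyhedron (R i)) ∧
    (∀ i j, i ≠ j → interior (R i) ∩ interior (R j) = ∅) ∧
    (⋃ i, R i) = D ∧
    (∀ i, ∀ x ∈ R i, f x = affineMapVec (K i) (g i) x)

/-- Scalar-valued piecewise affine function on `D`. -/
def IsPWAOnScalar {n : ℕ} (D : Set (Fin n → ℝ)) (f : (Fin n → ℝ) → ℝ) : Prop :=
  ∃ (r : ℕ) (R : Fin r → Set (Fin n → ℝ)) (a : Fin r → Fin n → ℝ) (c : Fin r → ℝ),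
    (∀ i, IsPolyhedron (R i)) ∧
    (∀ i j, i ≠ j → interior (R i) ∩ interior (R j) = ∅) ∧
    (⋃ i, R i) = D ∧
    (∀ i, ∀ x ∈ R i, f x = (∑ j, a i j * x j) + c i)

/-- `f` agrees with some affine function on the set `S`. -/
def AffineOnSet {n m : ℕ} (f : (Fin n → ℝ) → Fin m → ℝ) (S : Set (Fin n → ℝ)) : Prop :=
  ∃ (A : Matrix (Fin m) (Fin n) ℝ) (b : Fin m → ℝ), ∀ x ∈ S, f x = affineMapVec A b x

/-- A linear region of `f`: a nonempty open connected set on which `f` is affine,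
maximal with this property. -/
def IsLinearRegion {n m : ℕ} (f : (Fin n → ℝ) → Fin m → ℝ) (S : Set (Fin n → ℝ)) : Prop :=
  S.Nonempty ∧ IsOpen S ∧ IsConnected S ∧ AffineOnSet f S ∧
    ∀ S', IsOpen S' → IsConnected S' → S ⊂ S' → ¬ AffineOnSet f S'

/-- Maximum of a nonempty finite family of reals. -/
noncomputable def finMax {N : ℕ} (hN : 0 < N) (g : Fin N → ℝ) : ℝ :=
  Finset.univ.sup' (Finset.univ_nonempty_iff.mpr (Fin.pos_iff_nonempty.mp hN)) g

/-- The unit hypercube `[0,1]^n`. -/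
def unitCube (n : ℕ) : Set (Fin n → ℝ) := {x | ∀ i, 0 ≤ x i ∧ x i ≤ 1}

/-!
Along the segment from `x` to `y`, a continuous piecewise affine `f` has a piece `ℓ` with
`f x ≤ ℓ x` and `ℓ y ≤ f y`: follow the segment by continuous induction, switching at each point
to whichever of the current piece and the piece active just beyond it has the smaller slope.
Hence, on the cube, `f = max_T min_{i ∈ T} ℓ_i`, where `T` ranges over the sets of pieces with
`min_{i ∈ T} ℓ_i ≤ f` (Ovchinnikov's max-min representation). Each `G_T = -min_{i ∈ T} ℓ_i` is
a maximum of affine functions, and `max_T (-G_T) = max_T (∑_{T' ≠ T} G_{T'}) - ∑_T G_T` is a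
difference of two such maxima. Finally, on the nonnegative orthant a ReLU network of width `n + 1`
computes a maximum of affine functions `ℓ_0, …, ℓ_k`: `n` neurons carry `x ≥ 0` unchanged and
the last one carries `max_{j ≤ t} ℓ_j x - ℓ_t x ≥ 0` from layer to layer.
-/

section PiecewiseAffine

open Set

theorem exists_ge_left_le_right_of_isClosed_cover {ι : Type*} [Finite ι] {T : ι → Set ℝ}
    (hT : ∀ i, IsClosed (T i)) (hcover : Set.Icc 0 1 ⊆ ⋃ i, T i) {φ : ℝ → ℝ}
    (hφ : ContinuousOn φ (Set.Icc 0 1)) {p q : ι → ℝ}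
    (hagree : ∀ i, ∀ t ∈ T i, φ t = p i + q i * t) :
    ∃ i, φ 0 ≤ p i ∧ p i + q i ≤ φ 1 := by
  set G := {t | ∃ i, φ 0 ≤ p i ∧ p i + q i * t ≤ φ t}
  suffices Set.Icc 0 1 ⊆ G by simpa [G] using this ⟨zero_le_one, le_rfl⟩
  refine IsClosed.Icc_subset_of_forall_mem_nhdsWithin ?_ ?_ ?_
  · have : G ∩ Set.Icc 0 1 = ⋃ i ∈ {i | φ 0 ≤ p i}, {t ∈ Set.Icc 0 1 | p i + q i * t ≤ φ t} := by
      ext t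
      simp only [G, mem_inter_iff, mem_ofPred_eq, mem_iUnion, exists_prop]
      tauto
    rw [this]
    exact (toFinite _).isClosed_biUnion fun i _ => isClosed_Icc.isClosed_le (by fun_prop) hφ
  · obtain ⟨i, hi⟩ := mem_iUnion.1 (hcover ⟨le_rfl, zero_le_one⟩)
    have h0 := hagree i 0 hi
    exact ⟨i, by simp [h0], by simp [h0]⟩
  · rintro s ⟨⟨i, hi0, his⟩, hs0, hs1⟩
    -- near `s` on the right, every point lies in a piece that also contains `s`
    filter_upwards [Ioo_mem_nhdsGT hs1,
      nhdsWithin_le_nhds ((locallyFinite_of_finite T).eventually_subset hT s)] with t ht hTt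
    obtain ⟨k, hk⟩ := mem_iUnion.1 (hcover ⟨hs0.trans ht.1.le, ht.2.le⟩)
    have hks := hagree k s (hTt hk)
    have hkt := hagree k t hk
    rcases le_total (q i) (q k) with hik | hki
    · exact ⟨i, hi0, by nlinarith [ht.1]⟩
    · exact ⟨k, by nlinarith, hkt.ge⟩

theorem exists_ge_le_of_isClosed_cover {E ι : Type*} [AddCommGroup E] [Module ℝ E]
    [TopologicalSpace E] [IsTopologicalAddGroup E] [ContinuousSMul ℝ E] [Finite ι]
    {D : Set E} (hD : Convex ℝ D) {f : E → ℝ} (hf : ContinuousOn f D) {R : ι → Set E}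
    (hR : ∀ i, IsClosed (R i)) (hcover : D ⊆ ⋃ i, R i) {ℓ : ι → E →ᵃ[ℝ] ℝ}
    (hagree : ∀ i, ∀ x ∈ R i, f x = ℓ i x) {x y : E} (hx : x ∈ D) (hy : y ∈ D) :
    ∃ i, f x ≤ ℓ i x ∧ ℓ i y ≤ f y := by
  set γ : ℝ →ᵃ[ℝ] E := AffineMap.lineMap x y
  have hγD : MapsTo γ (Set.Icc 0 1) D := fun t ht => hD.lineMap_mem hx hy ht
  obtain ⟨i, hi⟩ := exists_ge_left_le_right_of_isClosed_cover (T := fun i => γ ⁻¹' R i)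
    (fun i => (hR i).preimage AffineMap.lineMap_continuous)
    (fun t ht => by simpa using hcover (hγD ht))
    (hf.comp AffineMap.lineMap_continuous.continuousOn hγD)
    (p := fun i => ℓ i x) (q := fun i => ℓ i y - ℓ i x) fun i t ht => by
      simp only [Function.comp_apply, hagree i _ ht, γ, AffineMap.apply_lineMap,
        AffineMap.lineMap_apply_ring']
      ring
  exact ⟨i, by simpa [γ] using hi⟩

theorem exists_sup'_inf'_eq_of_forall_exists_ge_le {α ι : Type*} [Fintype ι] {D : Set α}
    (hD : D.Nonempty) {f : α → ℝ} {ℓ : ι → α → ℝ}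
    (h : ∀ x ∈ D, ∀ y ∈ D, ∃ i, f x ≤ ℓ i x ∧ ℓ i y ≤ f y) :
    ∃ (𝒯 : Finset {T : Finset ι // T.Nonempty}) (h𝒯 : 𝒯.Nonempty),
      ∀ x ∈ D, f x = 𝒯.sup' h𝒯 fun T => T.1.inf' T.2 (ℓ · x) := by
  classical
  set 𝒯 := univ.filter fun T : {T : Finset ι // T.Nonempty} => ∀ y ∈ D, ∃ i ∈ T.1, ℓ i y ≤ f y
  have above : ∀ x ∈ D, ∃ T ∈ 𝒯, ∀ i ∈ T.1, f x ≤ ℓ i x := by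
    intro x hx
    obtain ⟨i, hi, -⟩ := h x hx x hx
    refine ⟨⟨univ.filter (f x ≤ ℓ · x), ⟨i, by simpa using hi⟩⟩, ?_, fun j hj => by simpa using hj⟩
    simpa [𝒯] using fun y hy => h x hx y hy
  obtain ⟨x₀, hx₀⟩ := hD
  obtain ⟨T₀, hT₀, -⟩ := above x₀ hx₀
  refine ⟨𝒯, ⟨T₀, hT₀⟩, fun x hx => le_antisymm ?_ (sup'_le _ _ fun T hT => ?_)⟩
  · obtain ⟨T, hT, hTx⟩ := above x hx
    exact le_sup'_of_le _ hT (le_inf' _ _ hTx)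
  · obtain ⟨i, hi, hix⟩ := (mem_filter.1 hT).2 x hx
    exact (inf'_le _ hi).trans hix

end PiecewiseAffine

def IsMaxAffine {n : ℕ} (g : (Fin n → ℝ) → ℝ) : Prop :=
  ∃ (S : Finset ((Fin n → ℝ) × ℝ)) (hS : S.Nonempty),
    g = fun x => S.sup' hS fun p => p.1 ⬝ᵥ x + p.2

namespace IsMaxAffine

variable {n : ℕ}

lemma affine (a : Fin n → ℝ) (c : ℝ) : IsMaxAffine fun x => a ⬝ᵥ x + c :=
  ⟨{(a, c)}, singleton_nonempty _, by simp⟩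

lemma add {g h : (Fin n → ℝ) → ℝ} (hg : IsMaxAffine g) (hh : IsMaxAffine h) :
    IsMaxAffine fun x => g x + h x := by
  classical
  obtain ⟨S, hS, rfl⟩ := hg
  obtain ⟨T, hT, rfl⟩ := hh
  refine ⟨image₂ (· + ·) S T, hS.image₂ hT, funext fun x => ?_⟩
  rw [sup'_image₂_left, sup'_add]
  refine sup'_congr _ rfl fun p _ => ?_
  rw [add_sup']
  refine sup'_congr _ rfl fun q _ => ?_
  simp only [Prod.fst_add, Prod.snd_add, add_dotProduct]
  ring

lemma sum {κ : Type*} (s : Finset κ) {G : κ → (Fin n → ℝ) → ℝ} (hG : ∀ k, IsMaxAffine (G k)) :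
    IsMaxAffine fun x => ∑ k ∈ s, G k x := by
  classical
  induction s using Finset.induction_on with
  | empty => simpa using affine 0 0
  | insert k s hk ih => simpa [sum_insert hk] using (hG k).add ih

lemma sup' {κ : Type*} (s : Finset κ) (hs : s.Nonempty) {G : κ → (Fin n → ℝ) → ℝ}
    (hG : ∀ k, IsMaxAffine (G k)) : IsMaxAffine fun x => s.sup' hs (G · x) := by
  classical
  choose S hS hGS using hG
  refine ⟨s.biUnion S, hs.biUnion fun k _ => hS k, funext fun x => ?_⟩
  rw [sup'_biUnion _ hs hS]
  simp only [hGS]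

lemma neg_inf' {ι : Type*} (T : Finset ι) (hT : T.Nonempty) (a : ι → Fin n → ℝ) (c : ι → ℝ) :
    IsMaxAffine fun x => -T.inf' hT fun i => a i ⬝ᵥ x + c i := by
  have h : ∀ x, -(T.inf' hT fun i => a i ⬝ᵥ x + c i) = T.sup' hT fun i => -a i ⬝ᵥ x + -c i := by
    intro x
    obtain ⟨i, hi, hmin⟩ := exists_mem_eq_inf' hT fun i => a i ⬝ᵥ x + c i
    refine le_antisymm ?_ (sup'_le _ _ fun j hj => ?_)
    · rw [hmin]
      exact le_sup'_of_le _ hi (by rw [neg_dotProduct]; linarith)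
    · have := inf'_le (fun i => a i ⬝ᵥ x + c i) hj
      rw [neg_dotProduct]
      linarith
  simpa only [h] using sup' T hT fun i => affine (-a i) (-c i)

lemma exists_sub_eq_sup'_neg {κ : Type*} (s : Finset κ) (hs : s.Nonempty)
    {G : κ → (Fin n → ℝ) → ℝ} (hG : ∀ k, IsMaxAffine (G k)) :
    ∃ P Q, IsMaxAffine P ∧ IsMaxAffine Q ∧ ∀ x, s.sup' hs (fun k => -G k x) = P x - Q x := by
  classical
  refine ⟨_, _, sup' s hs fun k => sum (s.erase k) hG, sum s hG, fun x => ?_⟩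
  rw [sub_eq_add_neg, sup'_add]
  refine sup'_congr hs rfl fun k hk => ?_
  rw [sum_erase_eq_sub hk]
  ring

end IsMaxAffine

lemma List.foldl_finRange_eq_of_step {α : Type*} {n : ℕ} (g : α → Fin n → α)
    (s : Fin (n + 1) → α) (hs : ∀ l, g (s l.castSucc) l = s l.succ) :
    (List.finRange n).foldl g (s 0) = s (Fin.last n) := by
  rw [← Fin.foldl_eq_finRange_foldl]
  induction n with
  | zero => rfl
  | succ n ih =>
    have := ih (fun a l => g a l.castSucc) (fun t => s t.castSucc) (fun l => hs l.castSucc)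
    rw [Fin.castSucc_zero] at this
    rw [Fin.foldl_succ_last, this, hs, Fin.succ_last]

lemma ReLUNetParams.eval_eq_of_hiddenStates {nx nu M n : ℕ} (p : ReLUNetParams nx nu M (n + 1))
    (x : Fin nx → ℝ) (s : Fin (n + 1) → Fin M → ℝ) (h0 : reluVec (p.W1 *ᵥ x + p.b1) = s 0)
    (hs : ∀ l : Fin n, reluVec (p.W l *ᵥ s l.castSucc + p.b l) = s l.succ) :
    p.eval x = p.Wout *ᵥ s (Fin.last n) + p.bout := by
  have := List.foldl_finRange_eq_of_step (fun ξ l => reluVec (p.W l *ᵥ ξ + p.b l)) s hs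
  rw [← h0] at this
  exact congrArg (fun ξ => p.Wout *ᵥ ξ + p.bout) this

lemma reluVec_cons_of_nonneg {n : ℕ} (u : ℝ) {x : Fin n → ℝ} (hx : ∀ i, 0 ≤ x i) :
    reluVec (vecCons u x) = vecCons (max 0 u) x := by
  ext i
  refine Fin.cases rfl (fun i => ?_) i
  simp [reluVec, hx i]

def carryMatrix {m n : ℕ} (r : Fin m → ℝ) (e : Fin n → Fin m) : Matrix (Fin (n + 1)) (Fin m) ℝ :=
  of (vecCons r fun i => Pi.single (e i) 1)

lemma carryMatrix_mulVec {m n : ℕ} (r : Fin m → ℝ) (e : Fin n → Fin m) (v : Fin m → ℝ) :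
    carryMatrix r e *ᵥ v = vecCons (r ⬝ᵥ v) (v ∘ e) := by
  rw [carryMatrix, cons_mulVec]
  congr 1
  ext i
  simp [mulVec]

def runningMaxNet {nx n : ℕ} (a : Fin (n + 1) → Fin nx → ℝ) (c : Fin (n + 1) → ℝ) :
    ReLUNetParams nx 1 (nx + 1) (n + 1) where
  W1 := carryMatrix 0 id
  b1 := 0
  W l := carryMatrix (vecCons 1 (a l.castSucc - a l.succ)) Fin.succ
  b l := vecCons (c l.castSucc - c l.succ) 0
  Wout := of ![vecCons 1 (a (Fin.last n))]
  bout := ![c (Fin.last n)]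

lemma Fin.Iic_succ {n : ℕ} (l : Fin n) : Iic l.succ = insert l.succ (Iic l.castSucc) := by
  rw [← Iio_insert]
  congr 1

lemma runningMaxNet_eval {nx n : ℕ} (a : Fin (n + 1) → Fin nx → ℝ) (c : Fin (n + 1) → ℝ)
    {x : Fin nx → ℝ} (hx : ∀ i, 0 ≤ x i) :
    (runningMaxNet a c).eval x 0 = univ.sup' univ_nonempty fun k => a k ⬝ᵥ x + c k := by
  set ℓ := fun k => a k ⬝ᵥ x + c k
  set M := fun t : Fin (n + 1) => (Iic t).sup' nonempty_Iic ℓ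
  have hM0 : M 0 = ℓ 0 := by simp [M, ← bot_eq_zero]
  have hMsucc : ∀ l : Fin n, M l.succ = max (M l.castSucc) (ℓ l.succ) := by
    intro l
    simp only [M]
    rw [sup'_congr _ (Fin.Iic_succ l) fun _ _ => rfl, sup'_insert, max_comm]
  have hMlast : M (Fin.last n) = univ.sup' univ_nonempty ℓ := by
    simp [M, ← Fin.top_eq_last]
  rw [ReLUNetParams.eval_eq_of_hiddenStates _ x fun t => vecCons (M t - ℓ t) x]
  · change vecCons 1 (a (Fin.last n)) ⬝ᵥ vecCons _ x + c (Fin.last n) = _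
    rw [cons_dotProduct_cons, ← hMlast]
    ring
  · simp only [runningMaxNet, carryMatrix_mulVec, zero_dotProduct, Function.comp_id, add_zero,
      hM0, sub_self, reluVec_cons_of_nonneg _ hx, max_self]
  · intro l
    simp only [runningMaxNet, carryMatrix_mulVec, cons_dotProduct_cons, Function.comp_def,
      cons_val_succ, cons_add_cons, add_zero, reluVec_cons_of_nonneg _ hx, hMsucc,
      ← max_sub_sub_right, sub_self]
    rw [max_comm]
    congr 2
    simp only [ℓ, sub_dotProduct]
    ring

lemma IsMaxAffine.exists_reluNet {n : ℕ} {g : (Fin n → ℝ) → ℝ} (hg : IsMaxAffine g) :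
    ∃ L, 1 ≤ L ∧ ∃ θ : ReLUNetParams n 1 (n + 1) L, ∀ x, (∀ i, 0 ≤ x i) → θ.eval x 0 = g x := by
  obtain ⟨S, hS, rfl⟩ := hg
  obtain ⟨m, hm⟩ := Nat.exists_eq_add_one_of_ne_zero hS.card_pos.ne'
  set e := S.equivFinOfCardEq hm
  refine ⟨m + 1, m.succ_pos, runningMaxNet (fun k => (e.symm k).1.1) (fun k => (e.symm k).1.2),
    fun x hx => ?_⟩
  rw [runningMaxNet_eval _ _ hx]
  refine le_antisymm (sup'_le _ _ fun k _ => le_sup' (fun p => p.1 ⬝ᵥ x + p.2) (e.symm k).2)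
    (sup'_le _ _ fun p hp => ?_)
  simpa only [Equiv.symm_apply_apply] using
    le_sup' (fun k => (e.symm k).1.1 ⬝ᵥ x + (e.symm k).1.2) (mem_univ (e ⟨p, hp⟩))

lemma IsPolyhedron.isClosed {n : ℕ} {S : Set (Fin n → ℝ)} (h : IsPolyhedron S) : IsClosed S := by
  obtain ⟨m, Z, z, rfl⟩ := h
  simp only [Set.ofPred_forall]
  exact isClosed_iInter fun i => isClosed_le (by fun_prop) continuous_const

lemma unitCube_eq_Icc (n : ℕ) : unitCube n = Set.Icc 0 1 := by
  ext x
  simp [unitCube, Pi.le_def, forall_and]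

def dotProductAffineMap {n : ℕ} (a : Fin n → ℝ) (c : ℝ) : (Fin n → ℝ) →ᵃ[ℝ] ℝ where
  toFun x := a ⬝ᵥ x + c
  linear := dotProductBilin ℝ ℝ a
  map_vadd' x v := by
    simp only [vadd_eq_add, dotProduct_add, dotProductBilin_apply_apply, add_assoc]

theorem pwa_diff_of_relu_nets_general (nx : ℕ) (f : (Fin nx → ℝ) → ℝ)
    (hcont : ContinuousOn f (unitCube nx))
    (hpwa : IsPWAOnScalar (unitCube nx) f) :
    ∃ (rγ rη : ℕ), 1 ≤ rγ ∧ 1 ≤ rη ∧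
      ∃ (θγ : ReLUNetParams nx 1 (nx + 1) rγ) (θη : ReLUNetParams nx 1 (nx + 1) rη),
        ∀ x ∈ unitCube nx, f x = θγ.eval x 0 - θη.eval x 0 := by
  obtain ⟨r, R, a, c, hpoly, -, hcover, hagree⟩ := hpwa
  have hcube := unitCube_eq_Icc nx
  obtain ⟨𝒯, h𝒯, hf⟩ := exists_sup'_inf'_eq_of_forall_exists_ge_le (D := unitCube nx)
    (hcube ▸ Set.nonempty_Icc.2 zero_le_one) (ℓ := fun i x => a i ⬝ᵥ x + c i)
    fun x hx y hy => exists_ge_le_of_isClosed_cover (ℓ := fun i => dotProductAffineMap (a i) (c i))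
      (hcube ▸ convex_Icc 0 1) hcont (fun i => (hpoly i).isClosed) hcover.ge hagree hx hy
  obtain ⟨P, Q, hP, hQ, hPQ⟩ :=
    IsMaxAffine.exists_sub_eq_sup'_neg 𝒯 h𝒯 fun T => IsMaxAffine.neg_inf' T.1 T.2 a c
  obtain ⟨rγ, hrγ, θγ, hθγ⟩ := hP.exists_reluNet
  obtain ⟨rη, hrη, θη, hθη⟩ := hQ.exists_reluNet
  refine ⟨rγ, rη, hrγ, hrη, θγ, θη, fun x hx => ?_⟩
  have hx_nonneg : ∀ i, 0 ≤ x i := fun i => (hx i).1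
  rw [hθγ x hx_nonneg, hθη x hx_nonneg, ← hPQ, hf x hx]
  simp only [neg_neg]

/-- a nonnegative continuous PWA function on the unit cube is the difference
of two ReLU networks of width `nx + 1`. -/
theorem pwa_diff_of_relu_nets (nx : ℕ) (f : (Fin nx → ℝ) → ℝ)
    (hcont : ContinuousOn f (unitCube nx))
    (hpwa : IsPWAOnScalar (unitCube nx) f)
    (hnonneg : ∀ x ∈ unitCube nx, 0 ≤ f x) :
    ∃ (rγ rη : ℕ), 1 ≤ rγ ∧ 1 ≤ rη ∧
      ∃ (θγ : ReLUNetParams nx 1 (nx + 1) rγ) (θη : ReLUNetParams nx 1 (nx + 1) rη),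
        ∀ x ∈ unitCube nx, f x = θγ.eval x 0 - θη.eval x 0 :=
  pwa_diff_of_relu_nets_general nx f hcont hpwa
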